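/- arXiv:2110.04973 — 4 statements merged into one kernel-verified Lean document; each statement's English description precedes it below -/
import Mathlib

section
/- Let G be a group acting sharply k-transitively on a finite set X with n elements, and let x = (x_1,...,x_n) be an enumeration of X such that the n−k windows (x_i,...,x_{i+k}) for 1 ≤ i ≤ n−k lie in pairwise distinct orbits of the coordinatewise G-action on the set of (k+1)-tuples of distinct elements of X. Then the orbit of x under G (acting coordinatewise) has the property that every (k+1)-tuple of distinct elements of X occurs exactly once as a contiguous subsequence of exactly one sequence in the orbit. -/
/-!
Sharp `k`-transitivity makes `g ↦ g • a` a bijection from `G` onto the injective `k`-tuples,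
for any injective `k`-tuple `a`; hence `|G| = n!/(n-k)!` and `G` acts freely on injective
`(k+1)`-tuples. The `n - k` windows of `x` lie in distinct orbits, so the map
`(g, i) ↦ g • (window i)` is injective, and it is bijective because both sides have
`(n - k) · n!/(n-k)! = n!/(n-k-1)!` elements.
-/

open Function

theorem nat_card_fin_embedding {X : Type*} [Finite X] (m : ℕ) :
    Nat.card (Fin m ↪ X) = (Nat.card X).descFactorial m := by
  classical
  have := Fintype.ofFinite X
  simp only [Nat.card_eq_fintype_card, Fintype.card_embedding_eq, Fintype.card_fin]

def IsSharplyMultiplyPretransitive (G X : Type*) [Group G] [MulAction G X] (m : ℕ) : Prop :=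
  ∀ a b : Fin m ↪ X, ∃! g : G, g • a = b

namespace IsSharplyMultiplyPretransitive

variable {G X : Type*} [Group G] [MulAction G X] {m : ℕ}

theorem of_injective
    (h : ∀ a b : Fin m → X, Injective a → Injective b → ∃! g : G, ∀ i, g • a i = b i) :
    IsSharplyMultiplyPretransitive G X m := fun a b =>
  (existsUnique_congr fun _ => DFunLike.ext_iff.symm).mp (h a b a.injective b.injective)

theorem bijective_smul (h : IsSharplyMultiplyPretransitive G X m) (a : Fin m ↪ X) :
    Bijective fun g : G => g • a :=
  (bijective_iff_existsUnique _).mpr (h a)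

theorem injective_smul (h : IsSharplyMultiplyPretransitive G X m) {ι : Type*}
    (e : Fin m ↪ ι) (a : ι ↪ X) : Injective fun g : G => g • a := fun g g' hgg' =>
  (h.bijective_smul (e.trans a)).injective <| by
    ext i
    exact DFunLike.congr_fun hgg' (e i)

theorem finite [Finite X] (h : IsSharplyMultiplyPretransitive G X m) (a : Fin m ↪ X) :
    Finite G :=
  Finite.of_injective _ (h.bijective_smul a).injective

theorem nat_card_eq [Finite X] (h : IsSharplyMultiplyPretransitive G X m) (a : Fin m ↪ X) :
    Nat.card G = (Nat.card X).descFactorial m := by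
  rw [Nat.card_eq_of_bijective _ (h.bijective_smul a), nat_card_fin_embedding]

end IsSharplyMultiplyPretransitive

theorem bijective_smul_of_injective_orbits {G Y ι : Type*} [Group G] [MulAction G Y]
    [Finite G] [Finite ι] [Finite Y] (w : ι → Y) (hfree : ∀ i, Injective fun g : G => g • w i)
    (horbit : ∀ i i', (∃ g : G, g • w i = w i') → i = i')
    (hcard : Nat.card G * Nat.card ι = Nat.card Y) :
    Bijective fun q : G × ι => q.1 • w q.2 := by
  refine (Nat.bijective_iff_injective_and_card _).mpr ⟨?_, by rw [Nat.card_prod, hcard]⟩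
  rintro ⟨g, i⟩ ⟨g', i'⟩ (hq : g • w i = g' • w i')
  obtain rfl : i = i' := horbit i i' ⟨g'⁻¹ * g, by rw [mul_smul, hq, inv_smul_smul]⟩
  rw [hfree i hq]

def window {X : Type*} {n : ℕ} (k : ℕ) (x : Fin n ↪ X) (i : Fin (n - k)) : Fin (k + 1) ↪ X :=
  ⟨fun j => x ⟨i.val + j.val, by omega⟩, fun j j' hjj' =>
    Fin.ext (Nat.add_left_cancel (congrArg Fin.val (x.injective hjj')))⟩

/-- The orbit of a sequencing of a sharply `k`-transitive `G`-set `X` forms an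
`(n, k+1)`-permutation design: every `(k+1)`-tuple of distinct elements occurs exactly
once as a contiguous subsequence of exactly one sequence in the orbit. -/
theorem stmt_0 {G X : Type*} [Group G] [MulAction G X] (n k : ℕ)
    (sharp : ∀ a b : Fin k → X, Function.Injective a → Function.Injective b →
      ∃! g : G, ∀ i, g • a i = b i)
    (x : Fin n ≃ X)
    (hwin : ∀ i₁ i₂ : Fin (n - k),
      (∃ g : G, ∀ j : Fin (k + 1),
        g • x ⟨i₁.val + j.val, by have := i₁.isLt; have := j.isLt; omega⟩ =
          x ⟨i₂.val + j.val, by have := i₂.isLt; have := j.isLt; omega⟩) → i₁ = i₂)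
    (t : Fin (k + 1) → X) (ht : Function.Injective t) :
    ∃! q : G × Fin (n - k), ∀ j : Fin (k + 1),
      q.1 • x ⟨q.2.val + j.val, by have := q.2.isLt; have := j.isLt; omega⟩ = t j := by
  have hsharp := IsSharplyMultiplyPretransitive.of_injective sharp
  have := Finite.of_equiv _ x
  let t' : Fin (k + 1) ↪ X := ⟨t, ht⟩
  -- `sharp` is vacuous when `k > n`; the injective tuple `t` supplies the base point that
  -- identifies `G` with `Fin k ↪ X`.
  let a : Fin k ↪ X := Fin.castSuccEmb.trans t'
  have := hsharp.finite a
  have hcard : Nat.card G * Nat.card (Fin (n - k)) = Nat.card (Fin (k + 1) ↪ X) := by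
    rw [hsharp.nat_card_eq a, nat_card_fin_embedding, Nat.card_congr x.symm, Nat.card_fin,
      Nat.card_fin, Nat.descFactorial_succ, mul_comm]
  have hbij := bijective_smul_of_injective_orbits (window k x.toEmbedding)
    (fun _ => hsharp.injective_smul Fin.castSuccEmb _)
    (fun i i' ⟨g, hg⟩ => hwin i i' ⟨g, DFunLike.congr_fun hg⟩) hcard
  exact (existsUnique_congr fun _ => DFunLike.ext_iff).mp (hbij.existsUnique t')
end

section
/- For any odd prime p, the sequence (0, 1, p−1, 2, p−2, 3, p−3, ...) enumerating Z/pZ (i.e., x_1 = 0 and x_{i+1} = x_i + (−1)^{i+1}·⌈i/1⌉ alternating: differences 1, −2, 3, −4, ...) has the property that the p−2 ratios ρ_i = (x_{i+2}−x_{i+1})/(x_i−x_{i+1}) computed in F_p are pairwise distinct. -/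
/-!
The successive differences of the zigzag sequence are `x_{j+1} - x_j = (-1)^j (j + 1)`, so the
signs cancel in each ratio and `ρ_i = (i + 2)/(i + 1) = 1 + 1/(i + 1)`. For `i < p - 2` the
residues `i + 1` are distinct and nonzero, and `t ↦ 1 + 1/t` is injective on `F_p \ {0}`.
-/

/-- The zigzag enumeration `0, 1, -1, 2, -2, …` of `Z/pZ` (0-indexed). -/
def zigzag (p : ℕ) (j : ℕ) : ZMod p :=
  if Even j then -((j / 2 : ℕ) : ZMod p) else ((j + 1) / 2 : ℕ)

lemma zigzag_succ_sub_zigzag (p j : ℕ) :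
    zigzag p (j + 1) - zigzag p j = (-1) ^ j * ((j : ZMod p) + 1) := by
  rcases Nat.even_or_odd' j with ⟨k, rfl | rfl⟩
  · have hhalf : (2 * k + 1 + 1) / 2 = k + 1 := by omega
    simp [zigzag, hhalf]
    ring
  · have hhalf : (2 * k + 1 + 1) / 2 = k + 1 := by omega
    simp [zigzag, Nat.even_add_one, hhalf, pow_succ]
    ring

lemma zigzag_ratio (p : ℕ) [Fact p.Prime] (i : ℕ) :
    (zigzag p (i + 2) - zigzag p (i + 1)) / (zigzag p i - zigzag p (i + 1)) =
      (((i + 1 : ℕ) : ZMod p) + 1) / ((i + 1 : ℕ) : ZMod p) := by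
  have hnum : zigzag p (i + 2) - zigzag p (i + 1) =
      -((-1) ^ i * (((i + 1 : ℕ) : ZMod p) + 1)) := by
    rw [zigzag_succ_sub_zigzag]; push_cast; ring
  have hden : zigzag p i - zigzag p (i + 1) = -((-1) ^ i * ((i + 1 : ℕ) : ZMod p)) := by
    rw [← neg_sub, zigzag_succ_sub_zigzag]; push_cast; rfl
  rw [hnum, hden, neg_div_neg_eq, mul_div_mul_left _ _ (by simp)]

lemma Set.injOn_add_one_div {K : Type*} [Field K] :
    Set.InjOn (fun t : K => (t + 1) / t) {0}ᶜ := by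
  intro s hs t ht hst
  simpa only [add_div, div_self hs, div_self ht, one_div, add_right_inj, inv_inj] using hst

lemma ZMod.natCast_injOn_Iio (p : ℕ) : Set.InjOn (Nat.cast : ℕ → ZMod p) (Set.Iio p) := by
  intro a ha b hb hab
  rwa [ZMod.natCast_eq_natCast_iff', Nat.mod_eq_of_lt ha, Nat.mod_eq_of_lt hb] at hab

theorem stmt_7_general (p : ℕ) [hp : Fact p.Prime] :
    Function.Injective (fun i : Fin (p - 2) =>
      (zigzag p (i.val + 2) - zigzag p (i.val + 1)) /
        (zigzag p i.val - zigzag p (i.val + 1))) := by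
  intro a b hab
  simp only [zigzag_ratio] at hab
  have hsucc_lt (i : Fin (p - 2)) : i.val + 1 < p := by omega
  have hsucc_ne_zero (i : Fin (p - 2)) : ((i.val + 1 : ℕ) : ZMod p) ≠ 0 := by
    rw [Ne, ZMod.natCast_eq_zero_iff]
    exact Nat.not_dvd_of_pos_of_lt i.val.succ_pos (hsucc_lt i)
  have hcast := Set.injOn_add_one_div (hsucc_ne_zero a) (hsucc_ne_zero b) hab
  exact Fin.ext <| Nat.succ_injective <|
    ZMod.natCast_injOn_Iio p (hsucc_lt a) (hsucc_lt b) hcast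

/-- For an odd prime `p`, the `p - 2` ratios `(x_{i+2} - x_{i+1})/(x_i - x_{i+1})`
of the zigzag sequence `0, 1, p-1, 2, p-2, …` in `F_p` are pairwise distinct. -/
theorem stmt_7 (p : ℕ) [hp : Fact p.Prime] (hodd : Odd p) :
    Function.Injective (fun i : Fin (p - 2) =>
      (zigzag p (i.val + 2) - zigzag p (i.val + 1)) /
        (zigzag p i.val - zigzag p (i.val + 1))) :=
  stmt_7_general p (hp := hp)
end

section
/- There is no enumeration (x_1,...,x_5) of P^1(F_4) such that the cross ratios ρ(x_1,x_2,x_3,x_4) and ρ(x_2,x_3,x_4,x_5) are distinct; equivalently, the sharply 3-transitive action of PGL_2(F_4) on P^1(F_4) admits no sequencing. -/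
/-!
By 3-transitivity there is `A ∈ GL₂(F₄)` with `x₀ ↦ x₁ ↦ x₂ ↦ x₃`, and by injectivity `A x₃` is
`x₀` or `x₄`. It is not `x₀`: write `[u, v]` for the determinant of representatives. A 4-cycle
`p ↦ q ↦ r ↦ s ↦ p` makes the cross ratios of `(p, q, r, s)` and `(q, r, s, p)` equal, i.e.
`[p, q][r, s] + [q, r][s, p] = 0`, and with the Plücker relation this gives
`[p, r][q, s] = 2 [p, q][r, s]`, which vanishes in characteristic 2 although `p ≠ r` and `q ≠ s`.
-/

open scoped LinearAlgebra.Projectivization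

/-- The action of an invertible matrix on the projective line `P¹(F) = ℙ F (Fin 2 → F)`,
i.e. the fractional linear transformation determined by `A`. -/
noncomputable def fracLin {F : Type*} [Field F] (A : GL (Fin 2) F) :
    ℙ F (Fin 2 → F) → ℙ F (Fin 2 → F) :=
  Projectivization.map (Matrix.mulVecLin (A : Matrix (Fin 2) (Fin 2) F)) (by
    intro u v h
    have h2 := congrArg
      (fun w => Matrix.mulVec ((A⁻¹ : GL (Fin 2) F) : Matrix (Fin 2) (Fin 2) F) w) h
    have h1 : ((A⁻¹ : GL (Fin 2) F) : Matrix (Fin 2) (Fin 2) F) *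
        ((A : GL (Fin 2) F) : Matrix (Fin 2) (Fin 2) F) = 1 := A.inv_mul
    simp only [Matrix.mulVecLin_apply] at h2
    rwa [Matrix.mulVec_mulVec, Matrix.mulVec_mulVec, h1, Matrix.one_mulVec, Matrix.one_mulVec] at h2)

open Matrix Projectivization

namespace ProjectiveLine

variable {F : Type*} [Field F]

def bracket (u v : Fin 2 → F) : F := (of ![u, v]).det

lemma bracket_apply (u v : Fin 2 → F) : bracket u v = u 0 * v 1 - u 1 * v 0 := by
  simp [bracket, det_fin_two]

lemma bracket_mulVec (A : Matrix (Fin 2) (Fin 2) F) (u v : Fin 2 → F) :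
    bracket (A *ᵥ u) (A *ᵥ v) = A.det * bracket u v := by
  simp only [bracket_apply, mulVec, dotProduct, Fin.sum_univ_two, det_fin_two]
  ring

lemma bracket_smul_left (a : F) (u v : Fin 2 → F) : bracket (a • u) v = a * bracket u v := by
  simp only [bracket_apply, Pi.smul_apply, smul_eq_mul]
  ring

lemma bracket_smul_right (a : F) (u v : Fin 2 → F) : bracket u (a • v) = a * bracket u v := by
  simp only [bracket_apply, Pi.smul_apply, smul_eq_mul]
  ring

lemma bracket_swap (u v : Fin 2 → F) : bracket v u = -bracket u v := by
  simp only [bracket_apply]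
  ring

lemma bracket_plucker (a b c d : Fin 2 → F) :
    bracket a b * bracket c d - bracket a c * bracket b d + bracket a d * bracket b c = 0 := by
  simp only [bracket_apply]
  ring

lemma eq_iff_bracket_rep_eq_zero {p q : ℙ F (Fin 2 → F)} : p = q ↔ bracket p.rep q.rep = 0 := by
  rw [← not_iff_not, ← ne_eq, ← linearIndependent_pair_iff_ne, ← ne_eq, ← isUnit_iff_ne_zero,
    bracket, ← isUnit_iff_isUnit_det, ← linearIndependent_rows_iff_isUnit]
  rfl

lemma bracket_rep_ne_zero {p q : ℙ F (Fin 2 → F)} (h : p ≠ q) : bracket p.rep q.rep ≠ 0 :=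
  mt eq_iff_bracket_rep_eq_zero.mpr h

lemma mk_eq_mk_iff_bracket_eq_zero {u v : Fin 2 → F} (hu : u ≠ 0) (hv : v ≠ 0) :
    mk F u hu = mk F v hv ↔ bracket u v = 0 := by
  obtain ⟨a, ha⟩ := exists_smul_eq_mk_rep F u hu
  obtain ⟨b, hb⟩ := exists_smul_eq_mk_rep F v hv
  rw [eq_iff_bracket_rep_eq_zero, ← ha, ← hb, Units.smul_def, Units.smul_def, bracket_smul_left,
    bracket_smul_right]
  simp [a.ne_zero, b.ne_zero]

lemma fracLin_eq_smul (A : GL (Fin 2) F) (p : ℙ F (Fin 2 → F)) : fracLin A p = A • p := rfl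

lemma fracLin_injective (A : GL (Fin 2) F) : Function.Injective (fracLin A) :=
  MulAction.injective A

lemma fracLin_mk_eq_iff (A : GL (Fin 2) F) {v : Fin 2 → F} (hv : v ≠ 0) (q : ℙ F (Fin 2 → F)) :
    fracLin A (mk F v hv) = q ↔ bracket ((A : Matrix (Fin 2) (Fin 2) F) *ᵥ v) q.rep = 0 := by
  conv_lhs => rw [← mk_rep q]
  exact mk_eq_mk_iff_bracket_eq_zero _ _

lemma exists_mulVec_rep_eq_smul_rep (A : GL (Fin 2) F) {p q : ℙ F (Fin 2 → F)}
    (h : fracLin A p = q) : ∃ a : Fˣ, (A : Matrix (Fin 2) (Fin 2) F) *ᵥ p.rep = a • q.rep := by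
  rw [← mk_rep p, ← mk_rep q, fracLin_eq_smul, smul_mk, mk_eq_mk_iff] at h
  obtain ⟨a, ha⟩ := h
  exact ⟨a, ha.symm⟩

theorem fracLin_ne_of_cycle [CharP F 2] (A : GL (Fin 2) F) {p q r s : ℙ F (Fin 2 → F)}
    (hpr : p ≠ r) (hqs : q ≠ s) (hpq : fracLin A p = q) (hqr : fracLin A q = r)
    (hrs : fracLin A r = s) : fracLin A s ≠ p := by
  intro hsp
  obtain ⟨a, ha⟩ := exists_mulVec_rep_eq_smul_rep A hpq
  obtain ⟨b, hb⟩ := exists_mulVec_rep_eq_smul_rep A hqr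
  obtain ⟨c, hc⟩ := exists_mulVec_rep_eq_smul_rep A hrs
  obtain ⟨d, hd⟩ := exists_mulVec_rep_eq_smul_rep A hsp
  have transport {u v u' v' : Fin 2 → F} {x y : Fˣ}
      (hu : (A : Matrix (Fin 2) (Fin 2) F) *ᵥ u = x • u')
      (hv : (A : Matrix (Fin 2) (Fin 2) F) *ᵥ v = y • v') :
      (A : Matrix (Fin 2) (Fin 2) F).det * bracket u v = x * y * bracket u' v' := by
    rw [← bracket_mulVec, hu, hv, Units.smul_def, Units.smul_def, bracket_smul_left,
      bracket_smul_right, mul_assoc]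
  have hΛ : (a * b * c * d : F) ≠ 0 := by simp
  have e₁ := transport ha hc
  have e₂ := transport hb hd
  have e₃ := transport ha hb
  have e₄ := transport hc hd
  have hdet : (A : Matrix (Fin 2) (Fin 2) F).det ^ 2 = -(a * b * c * d) := by
    refine mul_right_cancel₀ (mul_ne_zero (bracket_rep_ne_zero hpr) (bracket_rep_ne_zero hqs)) ?_
    rw [bracket_swap p.rep r.rep] at e₂
    linear_combination ((A : Matrix (Fin 2) (Fin 2) F).det * bracket q.rep s.rep) * e₁ +
      (a * c * bracket q.rep s.rep) * e₂
  have hsum : bracket p.rep q.rep * bracket r.rep s.rep + bracket q.rep r.rep * bracket s.rep p.rep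
      = 0 := by
    refine mul_left_cancel₀ hΛ ?_
    linear_combination (-(A : Matrix (Fin 2) (Fin 2) F).det * bracket r.rep s.rep) * e₃ -
      (a * b * bracket q.rep r.rep) * e₄ + (bracket p.rep q.rep * bracket r.rep s.rep) * hdet
  refine mul_ne_zero (bracket_rep_ne_zero hpr) (bracket_rep_ne_zero hqs) ?_
  linear_combination -bracket_plucker p.rep q.rep r.rep s.rep + hsum -
    bracket q.rep r.rep * bracket_swap p.rep s.rep +
    bracket q.rep r.rep * bracket p.rep s.rep * CharTwo.two_eq_zero (R := F)

theorem exists_fracLin_frame {p₀ p₁ p₂ : ℙ F (Fin 2 → F)} (h₀₁ : p₀ ≠ p₁) (h₀₂ : p₀ ≠ p₂)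
    (h₁₂ : p₁ ≠ p₂) :
    ∃ A : GL (Fin 2) F, fracLin A (mk F ![1, 0] (by simp)) = p₀ ∧
      fracLin A (mk F ![0, 1] (by simp)) = p₁ ∧ fracLin A (mk F ![1, 1] (by simp)) = p₂ := by
  set u₀ := p₀.rep
  set u₁ := p₁.rep
  set w := p₂.rep
  -- By Cramer's rule, `M *ᵥ ![1, 1] = bracket u₀ u₁ • w`.
  let M : Matrix (Fin 2) (Fin 2) F :=
    !![bracket w u₁ * u₀ 0, bracket u₀ w * u₁ 0; bracket w u₁ * u₀ 1, bracket u₀ w * u₁ 1]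
  have hM : M.det ≠ 0 := by
    have : M.det = bracket w u₁ * bracket u₀ w * bracket u₀ u₁ := by
      simp only [M, det_fin_two_of, bracket_apply]
      ring
    rw [this]
    exact mul_ne_zero (mul_ne_zero (bracket_rep_ne_zero h₁₂.symm) (bracket_rep_ne_zero h₀₂))
      (bracket_rep_ne_zero h₀₁)
  refine ⟨GeneralLinearGroup.mkOfDetNeZero M hM, ?_, ?_, ?_⟩ <;>
    simp only [fracLin_mk_eq_iff, GeneralLinearGroup.val_mkOfDetNeZero] <;>
    simp [M, bracket_apply] <;> ring

theorem exists_fracLin_eq₃ {p₀ p₁ p₂ q₀ q₁ q₂ : ℙ F (Fin 2 → F)} (hp₀₁ : p₀ ≠ p₁)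
    (hp₀₂ : p₀ ≠ p₂) (hp₁₂ : p₁ ≠ p₂) (hq₀₁ : q₀ ≠ q₁) (hq₀₂ : q₀ ≠ q₂) (hq₁₂ : q₁ ≠ q₂) :
    ∃ A : GL (Fin 2) F, fracLin A p₀ = q₀ ∧ fracLin A p₁ = q₁ ∧ fracLin A p₂ = q₂ := by
  obtain ⟨B, hB₀, hB₁, hB₂⟩ := exists_fracLin_frame hp₀₁ hp₀₂ hp₁₂
  obtain ⟨C, hC₀, hC₁, hC₂⟩ := exists_fracLin_frame hq₀₁ hq₀₂ hq₁₂
  refine ⟨C * B⁻¹, ?_, ?_, ?_⟩ <;>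
    simp only [fracLin_eq_smul, mul_smul] at * <;>
    simp only [← hB₀, ← hB₁, ← hB₂, inv_smul_smul, hC₀, hC₁, hC₂]

end ProjectiveLine

open ProjectiveLine

/-- The sharply 3-transitive action of `PGL₂(F₄)` on `P¹(F₄)` admits no sequencing:
for every enumeration `(x₁,…,x₅)` of the 5 points of `P¹(F₄)`, the two windows
`(x₁,x₂,x₃,x₄)` and `(x₂,x₃,x₄,x₅)` lie in the same `PGL₂(F₄)`-orbit, i.e. they have
equal cross ratios. -/
theorem stmt_12 (x : Fin 5 ≃ ℙ (GaloisField 2 2) (Fin 2 → GaloisField 2 2)) :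
    ∃ A : GL (Fin 2) (GaloisField 2 2), ∀ j : Fin 4,
      fracLin A (x ⟨j.val, by have := j.isLt; omega⟩) =
        x ⟨j.val + 1, by have := j.isLt; omega⟩ := by
  have hx (i j : Fin 5) (h : i ≠ j) : x i ≠ x j := x.injective.ne h
  obtain ⟨A, h₀, h₁, h₂⟩ := exists_fracLin_eq₃ (hx 0 1 (by decide)) (hx 0 2 (by decide))
    (hx 1 2 (by decide)) (hx 1 2 (by decide)) (hx 1 3 (by decide)) (hx 2 3 (by decide))
  have h₃ : fracLin A (x 3) = x 4 := by
    obtain ⟨i, hi⟩ := x.surjective (fracLin A (x 3))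
    fin_cases i
    · exact absurd hi.symm
        (fracLin_ne_of_cycle A (hx 0 2 (by decide)) (hx 1 3 (by decide)) h₀ h₁ h₂)
    · exact absurd (fracLin_injective A (h₀.trans hi)) (hx 0 3 (by decide))
    · exact absurd (fracLin_injective A (h₁.trans hi)) (hx 1 3 (by decide))
    · exact absurd (fracLin_injective A (h₂.trans hi)) (hx 2 3 (by decide))
    · exact hi.symm
  refine ⟨A, fun j => ?_⟩
  fin_cases j
  exacts [h₀, h₁, h₂, h₃]
end

section
/- Let R be a matrix arising from a sharply t-transitive action of a group G on a set X, i.e., the rows of R are the sequences (g·x_1, ..., g·x_n) for g ∈ G, for a fixed enumeration (x_1,...,x_n) of X. Then R satisfies the t-rectangle condition: whenever two 2×(t+1) submatrices of R (selecting 2 rows and t+1 columns each, possibly different column sets) agree in 2t+1 of their entries, they agree in all 2t+2 entries. -/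
/-!
Write `y j = x (c j)`, `z j = x (d j)`. Agreement of the rows `g, h` at column `j` says that
`h⁻¹ * g` sends `y j` to `z j`. The row without the exceptional position makes `h₂⁻¹ * g₂` send
every `y j` to `z j`, the other row makes `h₁⁻¹ * g₁` do so for the `t` distinct points `y j`,
`j ≠ j₀`. Sharpness forces `h₁⁻¹ * g₁ = h₂⁻¹ * g₂`, which gives the missing entry.
-/

section SharplyTransitive

variable {G X : Type*} [Group G] [MulAction G X] {t : ℕ}

theorem eq_of_smul_eq_smul_of_injective
    (sharp : ∀ a b : Fin t → X, Function.Injective a → Function.Injective b →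
      ∃! g : G, ∀ i, g • a i = b i)
    {a : Fin t → X} (ha : Function.Injective a) {g k : G} (hgk : ∀ i, g • a i = k • a i) :
    g = k :=
  (sharp a (fun i => g • a i) ha ((MulAction.injective g).comp ha)).unique
    (fun _ => rfl) (fun i => (hgk i).symm)

theorem smul_eq_smul_of_rows_agree_off
    (sharp : ∀ a b : Fin t → X, Function.Injective a → Function.Injective b →
      ∃! g : G, ∀ i, g • a i = b i)
    {u v : Fin (t + 1) → X} (hu : Function.Injective u) {g₁ h₁ g₂ h₂ : G} (j₀ : Fin (t + 1))
    (hrow₂ : ∀ j, g₂ • u j = h₂ • v j) (hrow₁ : ∀ j ≠ j₀, g₁ • u j = h₁ • v j) :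
    g₁ • u j₀ = h₁ • v j₀ := by
  have hquot : h₁⁻¹ * g₁ = h₂⁻¹ * g₂ :=
    eq_of_smul_eq_smul_of_injective sharp (hu.comp j₀.succAbove_right_injective) fun i => by
      simp only [Function.comp_apply, mul_smul, hrow₁ _ (j₀.succAbove_ne i),
        hrow₂, inv_smul_smul]
  rw [← inv_smul_eq_iff, ← mul_smul, hquot, mul_smul, hrow₂, inv_smul_smul]

end SharplyTransitive

theorem stmt_15_general {G X : Type*} [Group G] [MulAction G X] (n t : ℕ) (x : Fin n ≃ X)
    (sharp : ∀ a b : Fin t → X, Function.Injective a → Function.Injective b →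
      ∃! g : G, ∀ i, g • a i = b i)
    (g₁ g₂ h₁ h₂ : G) (c d : Fin (t + 1) → Fin n)
    (hc : Function.Injective c)
    (i₀ : Fin 2) (j₀ : Fin (t + 1))
    (hagree : ∀ (i : Fin 2) (j : Fin (t + 1)), (i, j) ≠ (i₀, j₀) →
      (if i = 0 then g₁ else g₂) • x (c j) = (if i = 0 then h₁ else h₂) • x (d j)) :
    ∀ (i : Fin 2) (j : Fin (t + 1)),
      (if i = 0 then g₁ else g₂) • x (c j) = (if i = 0 then h₁ else h₂) • x (d j) := by
  intro i j
  by_cases hij : (i, j) = (i₀, j₀)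
  · obtain ⟨rfl, rfl⟩ := Prod.ext_iff.mp hij
    have hother : i + 1 ≠ i := by fin_cases i <;> decide
    exact smul_eq_smul_of_rows_agree_off (u := x ∘ c) (v := x ∘ d) sharp
      (x.injective.comp hc) j (fun j' => hagree (i + 1) j' (by simp [hother]))
      (fun j' hj' => hagree i j' (by simp [hj']))
  · exact hagree i j hij

/-- A matrix arising from a sharply `t`-transitive group action (rows indexed by `g ∈ G`,
with `(g, i)` entry `g • x i` for an enumeration `x` of `X`) satisfies the `t`-rectangle
condition: if two `2 × (t+1)` submatrices (rows `g₁, g₂` with columns `c`, and rows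
`h₁, h₂` with columns `d`) agree in all entries except possibly at one position
`(i₀, j₀)`, then they agree everywhere. -/
theorem stmt_15 {G X : Type*} [Group G] [MulAction G X] (n t : ℕ) (x : Fin n ≃ X)
    (sharp : ∀ a b : Fin t → X, Function.Injective a → Function.Injective b →
      ∃! g : G, ∀ i, g • a i = b i)
    (g₁ g₂ h₁ h₂ : G) (c d : Fin (t + 1) → Fin n)
    (hc : Function.Injective c) (hd : Function.Injective d)
    (i₀ : Fin 2) (j₀ : Fin (t + 1))
    (hagree : ∀ (i : Fin 2) (j : Fin (t + 1)), (i, j) ≠ (i₀, j₀) →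
      (if i = 0 then g₁ else g₂) • x (c j) = (if i = 0 then h₁ else h₂) • x (d j)) :
    ∀ (i : Fin 2) (j : Fin (t + 1)),
      (if i = 0 then g₁ else g₂) • x (c j) = (if i = 0 then h₁ else h₂) • x (d j) :=
  stmt_15_general n t x sharp g₁ g₂ h₁ h₂ c d hc i₀ j₀ hagree
end
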